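/- Let 𝒯 be a probabilistic and/xor tree whose leaves are tuples t_1,…,t_n listed in strictly decreasing order of score, fix a tuple t_i, and let F^i(x,y) be the generating function of 𝒯 obtained by assigning x to the leaves t_l with l < i, y to the leaf t_i, and 1 to the leaves t_l with l > i. Then for every α ∈ ℂ, the PRF^e value Υ_α(t_i) = Σ_{j=1}^n α^j·Pr(r(t_i)=j) satisfies Υ_α(t_i) = F^i(α,α) − F^i(α,0). -/

import Mathlib

/-- A probabilistic and/xor tree with leaves labeled by elements of `L`.
An ∨-node (`xor` node) carries, for each child, the probability of the edge to that child;
an ∧-node (`and` node) simply has a list of children. -/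
inductive AXTree (L : Type) : Type
  | leaf : L → AXTree L
  | orNode : List (ℝ × AXTree L) → AXTree L
  | andNode : List (AXTree L) → AXTree L

namespace AXTree

variable {L : Type}

mutual
/-- Validity of a probabilistic and/xor tree: at each ∨-node, edge probabilities are
nonnegative and sum to at most 1. -/
def valid : AXTree L → Prop
  | .leaf _ => True
  | .orNode cs => (cs.map Prod.fst).sum ≤ 1 ∧ validOr cs
  | .andNode cs => validAnd cs

def validOr : List (ℝ × AXTree L) → Prop
  | [] => True
  | (q, c) :: cs => 0 ≤ q ∧ valid c ∧ validOr cs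

def validAnd : List (AXTree L) → Prop
  | [] => True
  | c :: cs => valid c ∧ validAnd cs
end

mutual
/-- The multiset of (labels of) leaves of an and/xor tree. -/
def leaves : AXTree L → Multiset L
  | .leaf a => {a}
  | .orNode cs => leavesOr cs
  | .andNode cs => leavesAnd cs

def leavesOr : List (ℝ × AXTree L) → Multiset L
  | [] => 0
  | (_, c) :: cs => leaves c + leavesOr cs

def leavesAnd : List (AXTree L) → Multiset L
  | [] => 0
  | c :: cs => leaves c + leavesAnd cs
end

mutual
/-- `dist 𝒯 s` is the probability that the random subset (multiset of leaves) generated by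
the and/xor tree `𝒯` equals `s`: a leaf generates itself; an ∨-node generates the subset of
its `l`-th child with the probability of the corresponding edge, and the empty set with the
remaining probability; an ∧-node generates the (disjoint) union of the independently
generated subsets of its children. -/
noncomputable def dist [DecidableEq L] : AXTree L → Multiset L → ℝ
  | .leaf a, s => if s = {a} then 1 else 0
  | .orNode cs, s => (if s = 0 then 1 - (cs.map Prod.fst).sum else 0) + distOr cs s
  | .andNode cs, s => distAnd cs s

noncomputable def distOr [DecidableEq L] : List (ℝ × AXTree L) → Multiset L → ℝ
  | [], _ => 0
  | (q, c) :: cs, s => q * dist c s + distOr cs s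

/-- Convolution over a list of independent children of an ∧-node. -/
noncomputable def distAnd [DecidableEq L] : List (AXTree L) → Multiset L → ℝ
  | [], s => if s = 0 then 1 else 0
  | c :: cs, s => ∑ t ∈ s.powerset.toFinset, dist c t * distAnd cs (s - t)
end

mutual
/-- The generating function of an and/xor tree with respect to a labeling `π` of its
leaves by elements of a commutative ℝ-algebra `R` (e.g. variables of a polynomial ring):
`F_v = π v` at a leaf, `F_v = (1 - Σ_l p_l) + Σ_l p_l · F_{v_l}` at an ∨-node, and
`F_v = ∏_l F_{v_l}` at an ∧-node. -/
noncomputable def genFun {R : Type} [CommRing R] [Algebra ℝ R] (π : L → R) : AXTree L → R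
  | .leaf a => π a
  | .orNode cs => algebraMap ℝ R (1 - (cs.map Prod.fst).sum) + genFunOr π cs
  | .andNode cs => genFunAnd π cs

noncomputable def genFunOr {R : Type} [CommRing R] [Algebra ℝ R] (π : L → R) :
    List (ℝ × AXTree L) → R
  | [] => 0
  | (q, c) :: cs => algebraMap ℝ R q * genFun π c + genFunOr π cs

noncomputable def genFunAnd {R : Type} [CommRing R] [Algebra ℝ R] (π : L → R) :
    List (AXTree L) → R
  | [] => 1
  | c :: cs => genFun π c * genFunAnd π cs
end

end AXTree

/-!
The generating function is the expectation of the monomial `∏_{l ∈ S} π l` over the random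
leaf set `S`: an ∨-node mixes its children's distributions linearly, and an ∧-node convolves
them, which multiplies their generating functions. Under the labeling of the theorem the
monomial of `S` is `α ^ #{l ∈ S | l < i} * y ^ [i ∈ S]`, so `F^i(α,α) - F^i(α,0)` keeps exactly
the sets containing `t_i`, each weighted by `α` to the rank of `t_i`; grouping them by rank
gives `Υ_α(t_i)`.
-/

namespace Multiset

variable {L : Type} [DecidableEq L]

theorem sum_powerset_toFinset_eq_of_le {M : Type} [AddCommMonoid M] (f : Multiset L → M)
    {A A' : Multiset L} (hA : A ≤ A') (hf : ∀ s, ¬ s ≤ A → f s = 0) :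
    ∑ s ∈ A'.powerset.toFinset, f s = ∑ s ∈ A.powerset.toFinset, f s := by
  refine (Finset.sum_subset (fun s hs => ?_) (fun s _ hs => hf s ?_)).symm
  · simp only [mem_toFinset, mem_powerset] at hs ⊢
    exact hs.trans hA
  · simpa only [mem_toFinset, mem_powerset] using hs

theorem sum_powerset_conv_smul_eq_mul {S R : Type} [CommSemiring S] [Semiring R] [Algebra S R]
    (f g : Multiset L → S) (P : Multiset L → R) (hP : ∀ u v, P (u + v) = P u * P v)
    {a b : Multiset L} (hf : ∀ s, ¬ s ≤ a → f s = 0) (hg : ∀ s, ¬ s ≤ b → g s = 0) :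
    ∑ s ∈ (a + b).powerset.toFinset, (∑ t ∈ s.powerset.toFinset, f t * g (s - t)) • P s =
      (∑ u ∈ a.powerset.toFinset, f u • P u) * ∑ v ∈ b.powerset.toFinset, g v • P v := by
  simp only [Finset.sum_mul_sum, ← Finset.sum_product', Finset.sum_smul]
  rw [Finset.sum_sigma']
  symm
  refine Finset.sum_bij_ne_zero (fun p _ _ => ⟨p.1 + p.2, p.1⟩) ?_ ?_ ?_ ?_
  · rintro ⟨u, v⟩ huv -
    simp only [Finset.mem_product, Finset.mem_sigma, mem_toFinset, mem_powerset] at huv ⊢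
    exact ⟨add_le_add huv.1 huv.2, le_add_right _ _⟩
  · rintro ⟨u, v⟩ - - ⟨u', v'⟩ - - h
    simp only [Sigma.mk.injEq, heq_eq_eq] at h
    obtain ⟨hsum, rfl⟩ := h
    rw [add_right_inj] at hsum
    rw [hsum]
  · rintro ⟨s, t⟩ hst hne
    simp only [Finset.mem_sigma, mem_toFinset, mem_powerset] at hst
    have hta : t ≤ a := by_contra fun h => hne (by simp [hf t h])
    have hstb : s - t ≤ b := by_contra fun h => hne (by simp [hg _ h])
    refine ⟨(t, s - t), ?_, ?_, ?_⟩
    · simp only [Finset.mem_product, mem_toFinset, mem_powerset]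
      exact ⟨hta, hstb⟩
    · rwa [smul_mul_smul_comm, ← hP, add_tsub_cancel_of_le hst.2]
    · simp [add_tsub_cancel_of_le hst.2]
  · rintro ⟨u, v⟩ - -
    simp only [add_tsub_cancel_left, hP, smul_mul_smul_comm]

end Multiset

namespace Multiset

variable {L M : Type} [LinearOrder L] [CommMonoid M]

theorem prod_map_ite_lt_ite_eq (s : Multiset L) (i : L) (x y : M) :
    (s.map fun l => if l < i then x else if l = i then y else 1).prod =
      x ^ card (s.filter (· < i)) * y ^ s.count i := by
  induction s using Multiset.induction_on with
  | empty => simp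
  | cons a s ih =>
    rcases lt_trichotomy a i with h | rfl | h
    · rw [count_cons_of_ne h.ne']
      simp [h, ih, pow_succ]
      ac_rfl
    · simp [ih, pow_succ]
      ac_rfl
    · rw [count_cons_of_ne h.ne]
      simp [h.ne', not_lt_of_gt h, ih]

theorem card_filter_lt_lt_card {s : Multiset L} {i : L} (hi : i ∈ s) :
    card (s.filter (· < i)) < card s := by
  refine card_lt_card ((filter_le _ s).lt_of_ne fun h => ?_)
  rw [← h] at hi
  exact lt_irrefl i (mem_filter.mp hi).2

theorem Nodup.prod_map_ite_lt_ite_eq_sub {R : Type} [CommRing R] {s : Multiset L}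
    (hs : s.Nodup) (i : L) (x : R) :
    (s.map fun l => if l < i then x else if l = i then x else 1).prod -
        (s.map fun l => if l < i then x else if l = i then 0 else 1).prod =
      if i ∈ s then x ^ (card (s.filter (· < i)) + 1) else 0 := by
  rw [prod_map_ite_lt_ite_eq, prod_map_ite_lt_ite_eq]
  split_ifs with hi
  · simp [count_eq_one_of_mem hs hi, pow_succ]
  · simp [count_eq_zero.mpr hi]

end Multiset

namespace AXTree

variable {L : Type} [DecidableEq L]

mutual
theorem dist_eq_zero_of_not_le : ∀ (t : AXTree L) (s : Multiset L), ¬ s ≤ t.leaves → dist t s = 0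
  | .leaf a, s, h => if_neg fun hs => h hs.le
  | .orNode cs, s, h => by
      have hs : s ≠ 0 := by rintro rfl; exact h (Multiset.zero_le _)
      rw [dist, distOr_eq_zero_of_not_le cs s h, if_neg hs, zero_add]
  | .andNode cs, s, h => distAnd_eq_zero_of_not_le cs s h

theorem distOr_eq_zero_of_not_le : ∀ (cs : List (ℝ × AXTree L)) (s : Multiset L),
    ¬ s ≤ leavesOr cs → distOr cs s = 0
  | [], _, _ => rfl
  | (q, c) :: cs, s, h => by
      rw [leavesOr] at h
      rw [distOr, dist_eq_zero_of_not_le c s fun hs => h (hs.trans (Multiset.le_add_right _ _)),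
        distOr_eq_zero_of_not_le cs s fun hs => h (hs.trans (Multiset.le_add_left _ _)),
        mul_zero, add_zero]

theorem distAnd_eq_zero_of_not_le : ∀ (cs : List (AXTree L)) (s : Multiset L),
    ¬ s ≤ leavesAnd cs → distAnd cs s = 0
  | [], _, h => if_neg fun hs => h hs.le
  | c :: cs, s, h => Finset.sum_eq_zero fun t ht => by
      rw [Multiset.mem_toFinset, Multiset.mem_powerset] at ht
      by_cases htc : t ≤ c.leaves
      · refine mul_eq_zero_of_right _ (distAnd_eq_zero_of_not_le cs (s - t) fun hs => h ?_)
        calc s = t + (s - t) := (add_tsub_cancel_of_le ht).symm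
          _ ≤ c.leaves + leavesAnd cs := add_le_add htc hs
      · exact mul_eq_zero_of_left (dist_eq_zero_of_not_le c t htc) _
end

variable {R : Type} [CommRing R] [Algebra ℝ R]

mutual
theorem genFun_eq_sum_dist (π : L → R) : ∀ t : AXTree L,
    genFun π t = ∑ s ∈ t.leaves.powerset.toFinset, dist t s • (s.map π).prod
  | .leaf a => by
      have h : ({a} : Multiset L).powerset.toFinset = {0, {a}} := by
        ext s
        simp [Multiset.le_singleton]
      rw [genFun, leaves, h, Finset.sum_pair (by simp)]
      simp [dist]
  | .orNode cs => by
      simp only [genFun, leaves, genFunOr_eq_sum_distOr, dist, add_smul, Finset.sum_add_distrib]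
      congr 1
      rw [Finset.sum_eq_single_of_mem 0 (by simp) fun s _ hs => by rw [if_neg hs, zero_smul]]
      simp [Algebra.algebraMap_eq_smul_one]
  | .andNode cs => genFunAnd_eq_sum_distAnd π cs

theorem genFunOr_eq_sum_distOr (π : L → R) : ∀ cs : List (ℝ × AXTree L),
    genFunOr π cs = ∑ s ∈ (leavesOr cs).powerset.toFinset, distOr cs s • (s.map π).prod
  | [] => by simp [genFunOr, distOr]
  | (q, c) :: cs => by
      simp only [genFunOr, leavesOr, distOr, add_smul, Finset.sum_add_distrib, mul_smul]
      rw [Multiset.sum_powerset_toFinset_eq_of_le _ (Multiset.le_add_right _ _)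
          fun s hs => by rw [dist_eq_zero_of_not_le c s hs, zero_smul, smul_zero],
        Multiset.sum_powerset_toFinset_eq_of_le _ (Multiset.le_add_left _ _)
          fun s hs => by rw [distOr_eq_zero_of_not_le cs s hs, zero_smul],
        ← Finset.smul_sum, ← genFun_eq_sum_dist, ← genFunOr_eq_sum_distOr, Algebra.smul_def]

theorem genFunAnd_eq_sum_distAnd (π : L → R) : ∀ cs : List (AXTree L),
    genFunAnd π cs = ∑ s ∈ (leavesAnd cs).powerset.toFinset, distAnd cs s • (s.map π).prod
  | [] => by simp [genFunAnd, leavesAnd, distAnd]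
  | c :: cs => by
      rw [genFunAnd, leavesAnd, genFun_eq_sum_dist π c, genFunAnd_eq_sum_distAnd π cs,
        ← Multiset.sum_powerset_conv_smul_eq_mul _ _ _
          (fun u v => by rw [Multiset.map_add, Multiset.prod_add])
          (dist_eq_zero_of_not_le c) (distAnd_eq_zero_of_not_le cs)]
      rfl
end

end AXTree

/-- Let `𝒯` be a probabilistic and/xor tree whose leaves are the tuples
`t_0, …, t_{n-1}` (each occurring exactly once), listed in strictly decreasing order of score,
and fix a tuple `t_i`.  Let `F^i(x,y)` be the generating function of `𝒯` obtained by assigning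
`x` to the leaves `t_l` with `l < i`, `y` to the leaf `t_i`, and `1` to the leaves `t_l` with
`l > i`.  Then for every `α ∈ ℂ`, the `PRF^e` value
`Υ_α(t_i) = Σ_{j=1}^n α^j · Pr(r(t_i) = j)` satisfies
`Υ_α(t_i) = F^i(α,α) − F^i(α,0)`. -/
theorem AXTree.prfe_eq_genFun_sub (n : ℕ) (𝒯 : AXTree (Fin n)) (hval : 𝒯.valid)
    (hleaves : AXTree.leaves 𝒯 = (Finset.univ : Finset (Fin n)).val)
    (i : Fin n) (α : ℂ) :
    ∑ j ∈ Finset.Icc 1 n,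
        α ^ j *
          ((∑ s ∈ (AXTree.leaves 𝒯).powerset.toFinset.filter
              (fun s => i ∈ s ∧ (s.filter (fun l => l < i)).card + 1 = j),
            AXTree.dist 𝒯 s : ℝ) : ℂ) =
      AXTree.genFun
          (fun l => if l < i then α else if l = i then α else 1) 𝒯 -
        AXTree.genFun
          (fun l => if l < i then α else if l = i then (0 : ℂ) else 1) 𝒯 := by
  set rank : Multiset (Fin n) → ℕ := fun s => Multiset.card (s.filter (· < i)) + 1
  have hnodup : (leaves 𝒯).Nodup := hleaves ▸ Finset.univ.nodup
  have hrank : ∀ s ∈ (leaves 𝒯).powerset.toFinset.filter (i ∈ ·), rank s ∈ Finset.Icc 1 n := by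
    intro s hs
    simp only [Finset.mem_filter, Multiset.mem_toFinset, Multiset.mem_powerset] at hs
    have hcard : Multiset.card s ≤ n := by
      simpa [hleaves] using Multiset.card_le_card hs.1
    have := Multiset.card_filter_lt_lt_card hs.2
    simp only [rank, Finset.mem_Icc]
    omega
  calc _ = ∑ j ∈ Finset.Icc 1 n, ∑ s ∈ (leaves 𝒯).powerset.toFinset.filter (i ∈ ·)
          with rank s = j, dist 𝒯 s • α ^ rank s := by
        refine Finset.sum_congr rfl fun j _ => ?_
        rw [Finset.filter_filter]
        push_cast
        rw [Finset.mul_sum]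
        refine Finset.sum_congr rfl fun s hs => ?_
        rw [(Finset.mem_filter.mp hs).2.2, Complex.real_smul, mul_comm]
    _ = ∑ s ∈ (leaves 𝒯).powerset.toFinset.filter (i ∈ ·), dist 𝒯 s • α ^ rank s :=
        Finset.sum_fiberwise_of_maps_to hrank _
    _ = _ := by
        rw [Finset.sum_filter, genFun_eq_sum_dist, genFun_eq_sum_dist, ← Finset.sum_sub_distrib]
        refine Finset.sum_congr rfl fun s hs => ?_
        rw [Multiset.mem_toFinset, Multiset.mem_powerset] at hs
        rw [← smul_sub, (Multiset.nodup_of_le hs hnodup).prod_map_ite_lt_ite_eq_sub, smul_ite,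
          smul_zero]
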